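/- Vertices s and t are disconnected by an edge set F in a graph G if and only if there exists an induced edge cut F' ⊆ F such that exactly one of the numbers n_s(F'), n_t(F') is even, where n_v(F') denotes the number of edges of F' on the path from the root r to v in a fixed spanning tree T of G. -/

import Mathlib

attribute [local instance] Classical.propDecidable

/-- `inducedCut G S` = δ(S): the set of edges of `G` with exactly one endpoint in `S`. -/
def inducedCut {V : Type} (G : SimpleGraph V) (S : Set V) : Set (Sym2 V) :=
  {e | e ∈ G.edgeSet ∧ ∃ u v : V, e = s(u, v) ∧ u ∈ S ∧ v ∉ S}

/-- The number of edges of `F'` appearing on a walk (its edge list). -/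
noncomputable def countEdgesIn {V : Type} (F' : Set (Sym2 V)) (l : List (Sym2 V)) : ℕ :=
  l.countP (fun e => decide (e ∈ F'))

lemma mem_inducedCut_iff {V : Type} (G : SimpleGraph V) (S : Set V) (u v : V) :
    s(u, v) ∈ inducedCut G S ↔
      G.Adj u v ∧ ((u ∈ S ∧ v ∉ S) ∨ (v ∈ S ∧ u ∉ S)) := by
  constructor
  · rintro ⟨he, a, b, hab, haS, hbS⟩
    refine ⟨he, ?_⟩
    rw [Sym2.eq_iff] at hab
    rcases hab with ⟨rfl, rfl⟩ | ⟨rfl, rfl⟩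
    · exact Or.inl ⟨haS, hbS⟩
    · exact Or.inr ⟨haS, hbS⟩
  · rintro ⟨he, ⟨hu, hv⟩ | ⟨hv, hu⟩⟩
    · exact ⟨he, u, v, rfl, hu, hv⟩
    · exact ⟨he, v, u, Sym2.eq_swap, hv, hu⟩

lemma countEdgesIn_cons {V : Type} (F' : Set (Sym2 V)) (e : Sym2 V) (l : List (Sym2 V)) :
    countEdgesIn F' (e :: l) =
      countEdgesIn F' l + if e ∈ F' then 1 else 0 := by
  simp [countEdgesIn, List.countP_cons]

lemma key_parity {V : Type} {G H : SimpleGraph V} (hHG : H ≤ G) (S : Set V)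
    {u v : V} (p : H.Walk u v) :
    Even (countEdgesIn (inducedCut G S) p.edges) ↔ (u ∈ S ↔ v ∈ S) := by
  induction p with
  | nil => simp [countEdgesIn]
  | @cons a b c h p ih =>
    rw [SimpleGraph.Walk.edges_cons, countEdgesIn_cons]
    by_cases hm : s(a, b) ∈ inducedCut G S
    · have hx := (mem_inducedCut_iff G S a b).mp hm
      simp only [hm, if_true, Nat.even_add_one, ih]
      rcases hx.2 with ⟨ha, hb⟩ | ⟨hb, ha⟩ <;> tauto
    · have hadj : G.Adj a b := hHG h
      have : ¬ ((a ∈ S ∧ b ∉ S) ∨ (b ∈ S ∧ a ∉ S)) := by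
        intro hc
        exact hm ((mem_inducedCut_iff G S a b).mpr ⟨hadj, hc⟩)
      simp only [hm, if_false, Nat.add_zero, ih]
      tauto

/-- `s` and `t` are disconnected by `F` iff there is an induced edge cut `F' ⊆ F`
such that exactly one of `n_s(F')`, `n_t(F')` is even, where `n_v(F')` counts the
edges of `F'` on the path in a fixed spanning tree `T` from the root `r` to `v`. -/
theorem stmt3 {V : Type} [Fintype V] [DecidableEq V] (G T : SimpleGraph V)
    (hG : G.Connected) (hT : T.IsTree) (hTG : T ≤ G) (r s t : V)
    (F : Set (Sym2 V)) (hF : F ⊆ G.edgeSet) :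
    ¬ (G.deleteEdges F).Reachable s t ↔
      ∃ F' ⊆ F, (∃ S : Set V, F' = inducedCut G S) ∧
        ∀ (ps : T.Walk r s) (pt : T.Walk r t), ps.IsPath → pt.IsPath →
          ¬ (Even (countEdgesIn F' ps.edges) ↔ Even (countEdgesIn F' pt.edges)) := by
  constructor
  · intro hns
    set S : Set V := {v | (G.deleteEdges F).Reachable s v} with hS
    have hsS : s ∈ S := SimpleGraph.Reachable.refl s
    have htS : t ∉ S := hns
    refine ⟨inducedCut G S, ?_, ⟨S, rfl⟩, ?_⟩
    · rintro e ⟨he, a, b, rfl, haS, hbS⟩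
      by_contra hef
      have hadj : G.Adj a b := G.mem_edgeSet.mp he
      have : (G.deleteEdges F).Adj a b := by
        rw [SimpleGraph.deleteEdges_adj]
        exact ⟨hadj, hef⟩
      exact hbS (haS.trans this.reachable)
    · intro ps pt _ _
      rw [key_parity hTG S ps, key_parity hTG S pt]
      tauto
  · rintro ⟨F', hF'F, ⟨S, rfl⟩, hpar⟩
    have hTc : T.Connected := hT.isConnected
    obtain ⟨ws⟩ := hTc r s
    obtain ⟨wt⟩ := hTc r t
    have h1 := hpar ws.toPath wt.toPath ws.toPath.2 wt.toPath.2
    rw [key_parity hTG S ws.toPath.1, key_parity hTG S wt.toPath.1] at h1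
    have hst : ¬ (s ∈ S ↔ t ∈ S) := by tauto
    intro ⟨p⟩
    have hle : G.deleteEdges F ≤ G := SimpleGraph.deleteEdges_le F
    have := (key_parity hle S p).not.mpr hst
    rw [Nat.not_even_iff_odd] at this
    have hpos : 0 < countEdgesIn (inducedCut G S) p.edges := this.pos
    rw [countEdgesIn, List.countP_pos_iff] at hpos
    obtain ⟨e, hel, hep⟩ := hpos
    have heF' : e ∈ inducedCut G S := of_decide_eq_true hep
    have : e ∈ (G.deleteEdges F).edgeSet := p.edges_subset_edgeSet hel
    rw [SimpleGraph.edgeSet_deleteEdges] at this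
    exact this.2 (hF'F heF')
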